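/- arXiv:2601.09184 — 2 statements merged into one kernel-verified Lean document; each statement's English description precedes it below -/
import Mathlib

section
/- The subproblem PS(x̂, S_i) has the integrality property: its LP relaxation has an optimal solution that is integral (0/1-valued), and the LP optimal value equals the integer-program optimal value. -/
open Finset

/-- The subproblem `PS(x̂, S_i)` has the integrality property: its LP
relaxation has an optimal solution that is 0/1-valued, and hence the LP optimal
value equals the integer-program optimal value. -/
theorem subproblem_integrality {F : Type*} [Fintype F] [Nonempty F]
    (dv : F → ℝ) (d : F → F → ℝ)
    (hdv : ∀ k, 0 ≤ dv k) (hd : ∀ k j, 0 ≤ d k j) :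
    ∃ (y : F → ℝ) (z : F → F → ℝ),
      -- y, z is feasible for the LP relaxation
      ((∀ k, 0 ≤ y k ∧ y k ≤ 1) ∧ (∀ j k, 0 ≤ z j k ∧ z j k ≤ 1) ∧
        (∑ k, y k = 1) ∧ (∀ j, ∑ k, z j k = 1) ∧ (∀ j k, y k ≤ z j k)) ∧
      -- y, z is integral (0/1-valued)
      (∀ k, y k = 0 ∨ y k = 1) ∧ (∀ j k, z j k = 0 ∨ z j k = 1) ∧
      -- y, z is optimal among all LP-feasible points
      (∀ (y' : F → ℝ) (z' : F → F → ℝ),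
        ((∀ k, 0 ≤ y' k ∧ y' k ≤ 1) ∧ (∀ j k, 0 ≤ z' j k ∧ z' j k ≤ 1) ∧
          (∑ k, y' k = 1) ∧ (∀ j, ∑ k, z' j k = 1) ∧ (∀ j k, y' k ≤ z' j k)) →
        ∑ k, (dv k * y k + ∑ j, d k j * z j k) ≤
          ∑ k, (dv k * y' k + ∑ j, d k j * z' j k)) := by
  classical
  set c : F → ℝ := fun k => dv k + ∑ j, d k j with hc
  obtain ⟨k0, -, hk0⟩ := Finset.exists_min_image Finset.univ c ⟨Classical.arbitrary F, mem_univ _⟩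
  refine ⟨fun k => if k = k0 then 1 else 0, fun j k => if k = k0 then 1 else 0,
    ⟨?_, ?_, ?_, ?_, ?_⟩, ?_, ?_, ?_⟩
  · intro k; by_cases h : k = k0 <;> simp [h]
  · intro j k; by_cases h : k = k0 <;> simp [h]
  · simp
  · intro j; simp
  · intro j k; simp
  · intro k; by_cases h : k = k0 <;> simp [h]
  · intro j k; by_cases h : k = k0 <;> simp [h]
  · intro y' z' ⟨hy', hz', hsy', hsz', hyz'⟩
    have hval : ∑ k, (dv k * (if k = k0 then (1:ℝ) else 0) +
        ∑ j, d k j * (if k = k0 then (1:ℝ) else 0)) = c k0 := by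
      rw [Finset.sum_eq_single k0]
      · simp [hc]
      · intro b _ hb; simp [hb]
      · intro h; exact absurd (mem_univ k0) h
    rw [hval]
    have h1 : ∀ k, c k * y' k ≤ dv k * y' k + ∑ j, d k j * z' j k := by
      intro k
      have : (∑ j, d k j) * y' k ≤ ∑ j, d k j * z' j k := by
        rw [Finset.sum_mul]
        exact Finset.sum_le_sum fun j _ =>
          mul_le_mul_of_nonneg_left (hyz' j k) (hd k j)
      simpa [hc, add_mul] using add_le_add (le_refl (dv k * y' k)) this
    calc c k0 = ∑ k, c k0 * y' k := by rw [← Finset.mul_sum, hsy', mul_one]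
      _ ≤ ∑ k, c k * y' k :=
          Finset.sum_le_sum fun k _ =>
            mul_le_mul_of_nonneg_right (hk0 k (mem_univ k)) (hy' k).1
      _ ≤ _ := Finset.sum_le_sum fun k _ => h1 k
end

section
/- The optimal value of the view-change subproblem for failed leader i equals min_{k ∈ F} (d_{kv} + ∑_{j∈F} d_{kj}) − g, where g is the saved latency of the failed leader; i.e., the subproblem reduces to a 1-median selection over the follower set. -/
open Finset

/-- The optimal value of the view-change subproblem for a failed
leader equals `min_{k∈F} exd(k) − g` with `exd(k) = d_{kv} + ∑_{j∈F} d_{kj}`;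
i.e., the subproblem reduces to a 1-median selection over the follower set. -/
theorem subproblem_value_eq_min_exd {F : Type*} [Fintype F] [DecidableEq F]
    (hF : Nonempty F) (dv : F → ℝ) (d : F → F → ℝ) (g : ℝ)
    (hdv : ∀ k, 0 ≤ dv k) (hd : ∀ k j, 0 ≤ d k j) :
    IsLeast
      {v : ℝ | ∃ (y : F → ℝ) (z : F → F → ℝ),
        (∀ k, y k = 0 ∨ y k = 1) ∧ (∀ j k, z j k = 0 ∨ z j k = 1) ∧
        (∑ k, y k = 1) ∧ (∀ j k, y k ≤ z j k) ∧ (∀ j, ∑ k, z j k = 1) ∧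
        v = ∑ k, (dv k * y k + ∑ j, d k j * z j k) - g}
      (univ.inf' univ_nonempty (fun k => dv k + ∑ j, d k j) - g) := by
  constructor
  · -- membership: choose the argmin
    obtain ⟨k₀, -, hk₀⟩ := exists_mem_eq_inf' (univ_nonempty (α := F))
      (fun k => dv k + ∑ j, d k j)
    refine ⟨fun k => if k = k₀ then 1 else 0, fun j k => if k = k₀ then 1 else 0,
      ?_, ?_, ?_, ?_, ?_, ?_⟩
    · intro k; by_cases h : k = k₀ <;> simp [h]
    · intro j k; by_cases h : k = k₀ <;> simp [h]
    · simp
    · intro j k; simp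
    · intro j; simp
    · rw [hk₀]
      have key : ∀ k : F, dv k * (if k = k₀ then (1:ℝ) else 0) +
          ∑ j, d k j * (if k = k₀ then (1:ℝ) else 0) =
          if k = k₀ then dv k + ∑ j, d k j else 0 := by
        intro k; by_cases h : k = k₀ <;> simp [h]
      simp only [key, Finset.sum_ite_eq' univ k₀, mem_univ, if_true]
  · -- lower bound
    rintro v ⟨y, z, hy01, hz01, hysum, hyz, hzsum, hv⟩
    -- find k₀ with y k₀ = 1
    have hex : ∃ k₀, y k₀ = 1 := by
      by_contra h
      push_neg at h
      have : ∀ k, y k = 0 := fun k => (hy01 k).resolve_right (h k)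
      simp [this] at hysum
    obtain ⟨k₀, hk₀⟩ := hex
    -- z j k₀ = 1 for all j
    have hz1 : ∀ j, z j k₀ = 1 := by
      intro j
      have := hyz j k₀
      rw [hk₀] at this
      rcases hz01 j k₀ with h | h
      · linarith
      · exact h
    -- z j k = 0 for k ≠ k₀
    have hz0 : ∀ j k, k ≠ k₀ → z j k = 0 := by
      intro j k hk
      have hsum := hzsum j
      rw [← Finset.add_sum_erase _ _ (mem_univ k₀), hz1 j] at hsum
      have hnn : ∀ k' ∈ (univ : Finset F).erase k₀, 0 ≤ z j k' := by
        intro k' _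
        rcases hz01 j k' with h | h <;> simp [h]
      have h0 : ∑ k' ∈ (univ : Finset F).erase k₀, z j k' = 0 := by linarith
      have := (Finset.sum_eq_zero_iff_of_nonneg hnn).mp h0
      exact this k (by simp [hk])
    have hy0 : ∀ k, k ≠ k₀ → y k = 0 := by
      intro k hk
      have hsum := hysum
      rw [← Finset.add_sum_erase _ _ (mem_univ k₀), hk₀] at hsum
      have hnn : ∀ k' ∈ (univ : Finset F).erase k₀, 0 ≤ y k' := by
        intro k' _
        rcases hy01 k' with h | h <;> simp [h]
      have h0 : ∑ k' ∈ (univ : Finset F).erase k₀, y k' = 0 := by linarith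
      have := (Finset.sum_eq_zero_iff_of_nonneg hnn).mp h0
      exact this k (by simp [hk])
    have hval : v = dv k₀ + ∑ j, d k₀ j - g := by
      rw [hv]
      congr 1
      rw [Finset.sum_eq_single k₀]
      · rw [hk₀]; simp [hz1]
      · intro k _ hk
        rw [hy0 k hk]
        have : ∀ j, d k j * z j k = 0 := fun j => by rw [hz0 j k hk, mul_zero]
        simp [this]
      · simp
    rw [hval]
    have : univ.inf' univ_nonempty (fun k => dv k + ∑ j, d k j) ≤ dv k₀ + ∑ j, d k₀ j :=
      inf'_le _ (mem_univ k₀)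
    linarith
end
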